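/- arXiv:2301.06845 — 5 statements merged into one kernel-verified Lean document; each statement's English description precedes it below -/
import Mathlib

section
/- Axiom DSC is sound: in any causal model with constraints M and context u, for disjoint sets of endogenous variables X and Y and setting y of Y, (M, u) ⊨ [disc(X), Y ← y]φ if and only if (M, u) ⊨ [X ← x, Y ← y]φ for every value assignment x ∈ R(X). -/
/-- A signature: exogenous variables, endogenous variables, and their ranges. -/
structure Sig where
  EU : Type
  EV : Type
  ValU : EU → Type
  ValV : EV → Type

/-- A context: an assignment of values to the exogenous variables. -/
abbrev Sig.Ctx (S : Sig) := ∀ u : S.EU, S.ValU u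

/-- A state: an assignment of values to the endogenous variables. -/
abbrev Sig.State (S : Sig) := ∀ X : S.EV, S.ValV X

/-- A structural equation for `X`: a function of the context and the values of
all variables other than `X`, returning a value for `X`. -/
abbrev Eqn (S : Sig) (X : S.EV) :=
  S.Ctx → (∀ Z : S.EV, Z ≠ X → S.ValV Z) → S.ValV X

/-- A causal model with constraints: a partial family of structural equations
together with a set `C` of admissible extended states. -/
structure CMC (S : Sig) where
  F : ∀ X : S.EV, Option (Eqn S X)
  C : Set (S.Ctx × S.State)

/-- An intervention: a partial assignment of values to endogenous variables. -/
abbrev Intervention (S : Sig) := ∀ X : S.EV, Option (S.ValV X)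

variable {S : Sig}

/-- `(u, v)` satisfies all the (defined) equations in the family `F`. -/
def satEq (F : ∀ X : S.EV, Option (Eqn S X)) (u : S.Ctx) (v : S.State) : Prop :=
  ∀ (X : S.EV) (f : Eqn S X), F X = some f → v X = f u (fun Z _ => v Z)

/-- The model `M_{Y ← y}`: each variable in the domain of `g` gets the
corresponding constant equation; other equations are unchanged. -/
def CMC.intervene (M : CMC S) (g : Intervention S) : CMC S where
  F := fun X => match g X with
    | some a => some (fun _ _ => a)
    | none => M.F X
  C := M.C

/-- The model `M_{−X}`: the equations of the variables in `D` are removed. -/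
def CMC.disconnect (M : CMC S) (D : S.EV → Bool) : CMC S where
  F := fun X => if D X then none else M.F X
  C := M.C

/-- `(M, u) ⊨ [g]φ`: every state `v` with `(u,v) ∈ C` satisfying the equations
of `F_g` satisfies `φ`. -/
def Box (M : CMC S) (u : S.Ctx) (g : Intervention S) (φ : S.State → Prop) : Prop :=
  ∀ v : S.State, (u, v) ∈ M.C → satEq (M.intervene g).F u v → φ v

/-- `(M, u) ⊨ ⟨g⟩φ`, defined as `¬[g]¬φ`. -/
def Dia (M : CMC S) (u : S.Ctx) (g : Intervention S) (φ : S.State → Prop) : Prop :=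
  ¬ Box M u g (fun v => ¬ φ v)

/-- Extend an intervention by additionally setting `X ← a`. -/
def iupd [DecidableEq S.EV] (g : Intervention S) (X : S.EV) (a : S.ValV X) :
    Intervention S :=
  Function.update g X (some a)

/-- soundness of axiom DSC. For disjoint `D` (the disconnected
variables `X`) and intervention `g` (`Y ← y`), `(M,u) ⊨ [disc(X), Y ← y]φ` iff
`(M,u) ⊨ [X ← x, Y ← y]φ` for every value assignment `x` to the variables in `X`. -/
theorem dsc_sound (M : CMC S) (u : S.Ctx) (D : S.EV → Bool) (g : Intervention S)
    (hdisj : ∀ Z, D Z = true → g Z = none) (φ : S.State → Prop) :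
    Box (M.disconnect D) u g φ ↔
      ∀ x : ∀ Z : S.EV, D Z = true → S.ValV Z,
        Box M u (fun Z => if h : D Z = true then some (x Z h) else g Z) φ := by
  constructor
  · intro hB x v hv hsat
    apply hB v hv
    intro X f hf
    simp only [CMC.intervene, CMC.disconnect] at hf ⊢
    by_cases hD : D X = true
    · simp [hD, hdisj X hD] at hf
    · have : (if h : D X = true then some (x X h) else g X) = g X := dif_neg hD
      have hsat' := hsat X f
      simp only [CMC.intervene] at hsat'
      rw [this] at hsat'
      cases hg : g X with
      | some a =>
        rw [hg] at hf hsat'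
        exact hsat' hf
      | none =>
        rw [hg] at hf hsat'
        simp only [if_neg hD] at hf
        exact hsat' hf
  · intro hB v hv hsat
    refine hB (fun Z _ => v Z) v hv ?_
    intro X f hf
    simp only [CMC.intervene] at hf ⊢
    have hsat' := hsat X f
    simp only [CMC.intervene, CMC.disconnect] at hsat'
    by_cases hD : D X = true
    · rw [dif_pos hD] at hf
      cases hf
      rfl
    · rw [dif_neg hD] at hf
      cases hg : g X with
      | some a =>
        rw [hg] at hf hsat'
        exact hsat' hf
      | none =>
        rw [hg] at hf hsat'
        simp only [if_neg hD] at hsat'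
        exact hsat' hf
end

section
/- Axiom D3 (composition) is sound in causal models with constraints: for any model M, context u, endogenous variable W ∉ X, set X of endogenous variables with setting x, value w of W, and Boolean formula φ, if (M, u) ⊨ ⟨X ← x⟩(W = w ∧ φ) then (M, u) ⊨ ⟨X ← x, W ← w⟩φ. -/
variable {S : Sig}

/-- soundness of axiom D3 (composition): if
`(M,u) ⊨ ⟨X ← x⟩(W = w ∧ φ)` and `W` is not intervened by `X ← x`, then
`(M,u) ⊨ ⟨X ← x, W ← w⟩φ`. -/
theorem d3_sound [DecidableEq S.EV] (M : CMC S) (u : S.Ctx) (g : Intervention S)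
    (W : S.EV) (hW : g W = none) (w : S.ValV W) (φ : S.State → Prop) :
    Dia M u g (fun v => v W = w ∧ φ v) → Dia M u (iupd g W w) φ := by
  intro h hbox
  apply h
  intro v hC hsat
  intro ⟨hw, hφ⟩
  refine hbox v hC ?_ hφ
  intro X f hf
  by_cases hX : X = W
  · subst hX
    simp only [CMC.intervene, iupd, Function.update_self] at hf
    cases hf
    exact hw
  · have : (M.intervene (iupd g W w)).F X = (M.intervene g).F X := by
      simp [CMC.intervene, iupd, Function.update_of_ne hX]
    exact hsat X f (this ▸ hf)
end

section
/- Axiom D5 (reversibility) is sound in causal models with constraints: for any model M, context u, distinct endogenous variables W, Y not in X, and Z = V \ (X ∪ {W, Y}), if (M, u) ⊨ ⟨X ← x, Y ← y⟩(W = w ∧ Z = z) and (M, u) ⊨ ⟨X ← x, W ← w⟩(Y = y ∧ Z = z), then (M, u) ⊨ ⟨X ← x⟩(W = w ∧ Y = y ∧ Z = z). -/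
variable {S : Sig}

section Intervention

variable {M : CMC S} {u : S.Ctx} {g : Intervention S}

theorem dia_iff {φ : S.State → Prop} :
    Dia M u g φ ↔ ∃ v, (u, v) ∈ M.C ∧ satEq (M.intervene g).F u v ∧ φ v := by
  simp only [Dia, Box, not_forall, not_not, exists_prop]

theorem satEq_of_forall_exists {F : ∀ X : S.EV, Option (Eqn S X)} {v : S.State}
    (h : ∀ X, ∃ F' : ∀ X : S.EV, Option (Eqn S X), satEq F' u v ∧ F' X = F X) :
    satEq F u v := by
  intro X f hf
  obtain ⟨F', hF', hFX⟩ := h X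
  exact hF' X f (hFX.trans hf)

theorem satEq_intervene_apply {v : S.State} (hv : satEq (M.intervene g).F u v) {X : S.EV}
    {a : S.ValV X} (hX : g X = some a) : v X = a :=
  hv X (fun _ _ => a) (by simp [CMC.intervene, hX])

variable [DecidableEq S.EV]

theorem iupd_apply_self (X : S.EV) (a : S.ValV X) : iupd g X a X = some a := by
  simp [iupd]

theorem iupd_apply_of_ne {X Y : S.EV} (a : S.ValV Y) (h : X ≠ Y) : iupd g Y a X = g X := by
  simp [iupd, h]

theorem intervene_iupd_F_of_ne {X Y : S.EV} (a : S.ValV Y) (h : X ≠ Y) :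
    (M.intervene (iupd g Y a)).F X = (M.intervene g).F X := by
  simp only [CMC.intervene, iupd_apply_of_ne a h]

theorem satEq_intervene_iupd_apply {v : S.State} {Y : S.EV} {a : S.ValV Y}
    (hv : satEq (M.intervene (iupd g Y a)).F u v) {X : S.EV} {b : S.ValV X}
    (hX : g X = some b) (hY : g Y = none) : v X = b := by
  have hXY : X ≠ Y := by rintro rfl; simp [hX] at hY
  exact satEq_intervene_apply hv (by rwa [iupd_apply_of_ne a hXY])

end Intervention

/-- soundness of axiom D5 (reversibility): with `W ≠ Y` both not
intervened by `g` (the intervention `X ← x`), and `z` a setting of the remaining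
variables `Z = V \ (X ∪ {W, Y})`, if `(M,u) ⊨ ⟨X ← x, Y ← y⟩(W = w ∧ Z = z)` and
`(M,u) ⊨ ⟨X ← x, W ← w⟩(Y = y ∧ Z = z)` then
`(M,u) ⊨ ⟨X ← x⟩(W = w ∧ Y = y ∧ Z = z)`. -/
theorem d5_sound [DecidableEq S.EV] (M : CMC S) (u : S.Ctx) (g : Intervention S)
    (W Y : S.EV) (hWY : W ≠ Y) (hW : g W = none) (hY : g Y = none)
    (w : S.ValV W) (y : S.ValV Y) (z : ∀ Z : S.EV, S.ValV Z) :
    Dia M u (iupd g Y y)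
      (fun v => v W = w ∧ ∀ Z, g Z = none → Z ≠ W → Z ≠ Y → v Z = z Z) →
    Dia M u (iupd g W w)
      (fun v => v Y = y ∧ ∀ Z, g Z = none → Z ≠ W → Z ≠ Y → v Z = z Z) →
    Dia M u g
      (fun v => v W = w ∧ v Y = y ∧ ∀ Z, g Z = none → Z ≠ W → Z ≠ Y → v Z = z Z) := by
  simp only [dia_iff]
  rintro ⟨v₁, hv₁C, hv₁, hv₁W, hv₁Z⟩ ⟨v₂, -, hv₂, hv₂Y, hv₂Z⟩
  have hv₁Y : v₁ Y = y := satEq_intervene_apply hv₁ (iupd_apply_self Y y)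
  have hv₂W : v₂ W = w := satEq_intervene_apply hv₂ (iupd_apply_self W w)
  -- The two witnesses agree on every variable, so `v₁` also satisfies the equation for `Y`.
  have hv₁₂ : v₁ = v₂ := by
    funext X
    rcases hgX : g X with _ | a
    · by_cases hXW : X = W
      · subst hXW; rw [hv₁W, hv₂W]
      by_cases hXY : X = Y
      · subst hXY; rw [hv₁Y, hv₂Y]
      rw [hv₁Z X hgX hXW hXY, hv₂Z X hgX hXW hXY]
    · rw [satEq_intervene_iupd_apply hv₁ hgX hY, satEq_intervene_iupd_apply hv₂ hgX hW]
  refine ⟨v₁, hv₁C, satEq_of_forall_exists fun X => ?_, hv₁W, hv₁Y, hv₁Z⟩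
  by_cases hXY : X = Y
  · subst hXY
    exact ⟨_, hv₁₂ ▸ hv₂, intervene_iupd_F_of_ne w hWY.symm⟩
  · exact ⟨_, hv₁, intervene_iupd_F_of_ne y hXY⟩
end

section
/- Axiom D9'' is sound: in any causal model with constraints M, context u, endogenous variable X, and setting y of Y = V \ {X}, if (M, u) ⊨ ⟨Y ← y, X ← x⟩true for every value x ∈ R(X), then (M, u) ⊨ ⟨Y ← y⟩true. -/
variable {S : Sig}

/-- soundness of axiom D9''. If `g` sets all endogenous variables
except `X` (i.e., `g` is the intervention `Y ← y` for `Y = V \ {X}`), and for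
every `x ∈ R(X)` we have `(M,u) ⊨ ⟨Y ← y, X ← x⟩true`, then
`(M,u) ⊨ ⟨Y ← y⟩true`. -/
theorem d9''_sound [DecidableEq S.EV] (M : CMC S) (u : S.Ctx) (X : S.EV)
    [Nonempty (S.ValV X)] (g : Intervention S)
    (hfull : ∀ Z, Z ≠ X → (g Z).isSome) (hX : g X = none)
    (h : ∀ x : S.ValV X, Dia M u (iupd g X x) (fun _ => True)) :
    Dia M u g (fun _ => True) := by
  classical
  intro hbox
  rcases hF : M.F X with _ | f
  · obtain ⟨x⟩ := (inferInstance : Nonempty (S.ValV X))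
    refine h x fun v hv hsat _ => hbox v hv ?_ trivial
    intro Z f' hf'
    by_cases hZ : Z = X
    · subst hZ
      simp [CMC.intervene, hX, hF] at hf'
    · have : (M.intervene (iupd g X x)).F Z = some f' := by
        simpa [CMC.intervene, iupd, Function.update_of_ne hZ] using hf'
      exact hsat Z f' this
  · set x := f u (fun Z hZ => (g Z).get (hfull Z hZ)) with hxdef
    refine h x fun v hv hsat _ => hbox v hv ?_ trivial
    have hvZ : ∀ Z (hZ : Z ≠ X), v Z = (g Z).get (hfull Z hZ) := by
      intro Z hZ
      obtain ⟨a, ha⟩ := Option.isSome_iff_exists.mp (hfull Z hZ)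
      have heq : (M.intervene (iupd g X x)).F Z = some (fun _ _ => a) := by
        simp [CMC.intervene, iupd, Function.update_of_ne hZ, ha]
      simpa [ha] using hsat Z _ heq
    have hvX : v X = x := by
      have heq : (M.intervene (iupd g X x)).F X = some (fun _ _ => x) := by
        simp [CMC.intervene, iupd]
      exact hsat X _ heq
    intro Z f' hf'
    by_cases hZ : Z = X
    · subst hZ
      have hf'' : f' = f := by
        exact (by simpa [CMC.intervene, hX, hF] using hf' : f = f').symm
      subst hf''
      rw [hvX, hxdef]
      congr 1
      funext Z hZ2
      exact (hvZ Z hZ2).symm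
    · have : (M.intervene (iupd g X x)).F Z = some f' := by
        simpa [CMC.intervene, iupd, Function.update_of_ne hZ] using hf'
      exact hsat Z f' this
end

section
/- Axiom D9' is sound: in any causal model with constraints M, context u, endogenous variable X with Y = V \ {X}, values x ≠ x' and x'' in R(X), and settings y, y* of Y: if (M, u) ⊨ ⟨Y ← y⟩(X = x), (M, u) ⊨ ⟨Y ← y⟩(X = x'), and (M, u) ⊨ ⟨Y ← y*, X ← x''⟩true, then (M, u) ⊨ ⟨Y ← y*⟩(X = x''). -/
variable {S : Sig}

/-- soundness of axiom D9'. With `Y = V \ {X}` (both `g` and `g'`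
set exactly the variables other than `X`), `x ≠ x'`, if
`(M,u) ⊨ ⟨Y ← y⟩(X = x)`, `(M,u) ⊨ ⟨Y ← y⟩(X = x')`, and
`(M,u) ⊨ ⟨Y ← y*, X ← x''⟩true`, then `(M,u) ⊨ ⟨Y ← y*⟩(X = x'')`. -/
theorem d9'_sound [DecidableEq S.EV] (M : CMC S) (u : S.Ctx) (X : S.EV)
    (g g' : Intervention S)
    (hfull : ∀ Z, Z ≠ X → (g Z).isSome) (hX : g X = none)
    (hfull' : ∀ Z, Z ≠ X → (g' Z).isSome) (hX' : g' X = none)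
    (x x' x'' : S.ValV X) (hne : x ≠ x')
    (h1 : Dia M u g (fun v => v X = x))
    (h2 : Dia M u g (fun v => v X = x'))
    (h3 : Dia M u (iupd g' X x'') (fun _ => True)) :
    Dia M u g' (fun v => v X = x'') := by
  classical
  have ext1 : ∃ v, (u, v) ∈ M.C ∧ satEq (M.intervene g).F u v ∧ v X = x := by
    by_contra h
    exact h1 fun v hc hs hx => h ⟨v, hc, hs, hx⟩
  have ext2 : ∃ v, (u, v) ∈ M.C ∧ satEq (M.intervene g).F u v ∧ v X = x' := by
    by_contra h
    exact h2 fun v hc hs hx => h ⟨v, hc, hs, hx⟩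
  have ext3 : ∃ v, (u, v) ∈ M.C ∧ satEq (M.intervene (iupd g' X x'')).F u v := by
    by_contra h
    exact h3 fun v hc hs _ => h ⟨v, hc, hs⟩
  obtain ⟨v1, hv1C, hv1E, hv1X⟩ := ext1
  obtain ⟨v2, hv2C, hv2E, hv2X⟩ := ext2
  obtain ⟨v3, hv3C, hv3E⟩ := ext3
  -- v1 and v2 agree outside X
  have hagree : ∀ Z, Z ≠ X → v1 Z = v2 Z := by
    intro Z hZ
    obtain ⟨a, ha⟩ := Option.isSome_iff_exists.mp (hfull Z hZ)
    have e1 := hv1E Z (fun _ _ => a) (by simp [CMC.intervene, ha])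
    have e2 := hv2E Z (fun _ _ => a) (by simp [CMC.intervene, ha])
    rw [e1, e2]
  -- F X must be undefined
  have hFX : M.F X = none := by
    cases hMF : M.F X with
    | none => rfl
    | some f =>
      have hIF : (M.intervene g).F X = some f := by
        simp [CMC.intervene, hX, hMF]
      have e1 := hv1E X f hIF
      have e2 := hv2E X f hIF
      have : v1 X = v2 X := by
        rw [e1, e2]
        congr 1
        funext Z hZ
        exact hagree Z hZ
      exact absurd (hv1X ▸ hv2X ▸ this) hne
  -- v3 X = x''
  have hv3X : v3 X = x'' := by
    have : (M.intervene (iupd g' X x'')).F X = some (fun _ _ => x'') := by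
      simp [CMC.intervene, iupd, Function.update]
    exact hv3E X _ this
  -- v3 satisfies the equations of M.intervene g'
  have hv3E' : satEq (M.intervene g').F u v3 := by
    intro Z f hZf
    by_cases hZ : Z = X
    · subst hZ
      have : (M.intervene g').F Z = none := by
        simp [CMC.intervene, hX', hFX]
      rw [this] at hZf
      exact absurd hZf (by simp)
    · obtain ⟨a, ha⟩ := Option.isSome_iff_exists.mp (hfull' Z hZ)
      have hconst : (M.intervene g').F Z = some (fun _ _ => a) := by
        simp [CMC.intervene, ha]
      rw [hconst] at hZf
      injection hZf with h; subst h
      have : (M.intervene (iupd g' X x'')).F Z = some (fun _ _ => a) := by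
        simp [CMC.intervene, iupd, Function.update_of_ne hZ, ha]
      exact hv3E Z _ this
  intro hB
  exact hB v3 hv3C hv3E' hv3X
end
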